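/- arXiv:2001.04372 — 5 statements merged into one kernel-verified Lean document; each statement's English description precedes it below -/
import Mathlib

section
/- In a normed vector space V, if d is a point and D is a set of points containing d, then the Voronoi cell V_d = {x ∈ V : ∀ d' ∈ D, ‖x - d‖ ≤ ‖x - d'‖} is star-shaped with respect to d, i.e., for every x ∈ V_d and s ∈ [0,1], the point d + s(x - d) belongs to V_d. -/
/-!
Moving from `x` towards `d` along a segment shortens the distance to `d` by exactly the length
travelled, while by the triangle inequality it shortens the distance to any other site `d'` by
at most that much; so the inequality `dist x d ≤ dist x d'` is preserved along the segment.
-/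

theorem dist_le_dist_of_dist_add_dist_eq {X : Type*} [PseudoMetricSpace X] {c x y p : X}
    (hy : dist c y + dist y x = dist c x) (hx : dist x c ≤ dist x p) :
    dist y c ≤ dist y p :=
  calc dist y c = dist x c - dist x y := by
        rw [dist_comm y c, dist_comm x c, dist_comm x y]; linarith
    _ ≤ dist x p - dist x y := by gcongr
    _ ≤ dist y p := by linarith [dist_triangle x y p]

def voronoiCell {X : Type*} [PseudoMetricSpace X] (D : Set X) (d : X) : Set X :=
  {y | ∀ d' ∈ D, dist y d ≤ dist y d'}

theorem starConvex_voronoiCell {V : Type*} [NormedAddCommGroup V] [NormedSpace ℝ V]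
    (D : Set V) (d : V) : StarConvex ℝ d (voronoiCell D d) :=
  starConvex_iff_segment_subset.2 fun _ hx _ hy d' hd' =>
    dist_le_dist_of_dist_add_dist_eq (dist_add_dist_of_mem_segment hy) (hx d' hd')

theorem voronoiCell_eq_setOf_norm_sub_le {V : Type*} [SeminormedAddCommGroup V]
    (D : Set V) (d : V) : voronoiCell D d = {y : V | ∀ d' ∈ D, ‖y - d‖ ≤ ‖y - d'‖} := by
  simp only [voronoiCell, dist_eq_norm]

theorem voronoi_cell_starshaped_general
    {V : Type*} [NormedAddCommGroup V] [NormedSpace ℝ V]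
    (D : Set V) (d : V)
    (x : V) (hx : x ∈ {y : V | ∀ d' ∈ D, ‖y - d‖ ≤ ‖y - d'‖})
    (s : ℝ) (hs : s ∈ Set.Icc (0 : ℝ) 1) :
    d + s • (x - d) ∈ {y : V | ∀ d' ∈ D, ‖y - d‖ ≤ ‖y - d'‖} := by
  rw [← voronoiCell_eq_setOf_norm_sub_le] at hx ⊢
  exact (starConvex_voronoiCell D d).add_smul_sub_mem hx hs.1 hs.2

theorem voronoi_cell_starshaped
    {V : Type*} [NormedAddCommGroup V] [NormedSpace ℝ V]
    (D : Set V) (d : V) (hd : d ∈ D)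
    (x : V) (hx : x ∈ {y : V | ∀ d' ∈ D, ‖y - d‖ ≤ ‖y - d'‖})
    (s : ℝ) (hs : s ∈ Set.Icc (0 : ℝ) 1) :
    d + s • (x - d) ∈ {y : V | ∀ d' ∈ D, ‖y - d‖ ≤ ‖y - d'‖} :=
  voronoi_cell_starshaped_general D d x hx s hs
end

section
/- Let X be a separable Banach space and 0 < δ < 1. Then there exists a sequence (v_j, v_j*) in X × X* such that: (a) ‖v_j‖ = ‖v_j*‖ = v_j*(v_j) = 1 for all j; (b) |v_j*(v_k)| ≤ δ whenever j < k; (c) sup_j |v_j*(v)| ≥ δ‖v‖ for all v ∈ X. -/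
/-!
Fix a sequence `(y k)` dense in the unit sphere and choose the pairs greedily: `v k = y k` if
every earlier functional is at most `δ` in absolute value at `y k`, and otherwise `v k` is a unit
vector in the common kernel of the earlier functionals, which is nontrivial because `X` is
infinite-dimensional; `v* k` is a norming functional of `v k`. Then (a) and (b) hold by
construction. For (c), given a unit vector `x` and `y k` within `ε` of it, either some earlier
`v* j` exceeds `δ` at `y k`, hence `δ - ε` at `x`, or `v k = y k` and `|v* k x| ≥ 1 - ε > δ - ε`.
-/

open Metric Set

theorem Nat.exists_seq_forall_of_forall_exists {α : Type*} {P : (k : ℕ) → (Fin k → α) → α → Prop}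
    (h : ∀ k prev, ∃ a, P k prev a) : ∃ a : ℕ → α, ∀ k, P k (fun j => a j) (a k) := by
  choose next hnext using h
  refine ⟨Nat.strongRec fun k ih => next k fun j => ih j j.2, fun k => ?_⟩
  beta_reduce
  rw [Nat.strongRec_eq]
  exact hnext _ _

theorem exists_norm_eq_one_forall_apply_eq_zero {𝕜 X ι : Type*} [RCLike 𝕜] [NormedAddCommGroup X]
    [NormedSpace 𝕜 X] [Finite ι] (hinf : ¬ FiniteDimensional 𝕜 X) (f : ι → X →L[𝕜] 𝕜) :
    ∃ v : X, ‖v‖ = 1 ∧ ∀ i, f i v = 0 := by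
  let L : X →ₗ[𝕜] ι → 𝕜 := LinearMap.pi fun i => (f i : X →ₗ[𝕜] 𝕜)
  have hker : LinearMap.ker L ≠ ⊥ := fun h =>
    hinf (Module.Finite.of_injective L (LinearMap.ker_eq_bot.mp h))
  obtain ⟨v, hv, hv0⟩ := Submodule.exists_mem_ne_zero_of_ne_bot hker
  refine ⟨(‖v‖⁻¹ : 𝕜) • v, norm_smul_inv_norm hv0, fun i => ?_⟩
  rw [map_smul, show f i v = 0 from congrFun hv i, smul_zero]

section

variable {X : Type*} [NormedAddCommGroup X] [NormedSpace ℝ X]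

theorem exists_norm_eq_one_apply_eq_one {v : X} (hv : ‖v‖ = 1) :
    ∃ g : X →L[ℝ] ℝ, ‖g‖ = 1 ∧ g v = 1 := by
  obtain ⟨g, hg, hgv⟩ := exists_dual_vector ℝ v (norm_ne_zero_iff.mp (by simp [hv]))
  exact ⟨g, hg, by simp [hgv, hv]⟩

theorem exists_norming_pair_abs_apply_le {ι : Type*} [Finite ι] (hinf : ¬ FiniteDimensional ℝ X)
    {δ : ℝ} (hδ : 0 ≤ δ) (f : ι → X →L[ℝ] ℝ) {y : X} (hy : ‖y‖ = 1) :
    ∃ p : X × (X →L[ℝ] ℝ), (‖p.1‖ = 1 ∧ ‖p.2‖ = 1 ∧ p.2 p.1 = 1) ∧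
      (∀ i, |f i p.1| ≤ δ) ∧ ((∀ i, |f i y| ≤ δ) → p.1 = y) := by
  obtain ⟨v, hv, hfv, hvy⟩ :
      ∃ v : X, ‖v‖ = 1 ∧ (∀ i, |f i v| ≤ δ) ∧ ((∀ i, |f i y| ≤ δ) → v = y) := by
    by_cases hfy : ∀ i, |f i y| ≤ δ
    · exact ⟨y, hy, hfy, fun _ => rfl⟩
    · obtain ⟨v, hv, hfv⟩ := exists_norm_eq_one_forall_apply_eq_zero hinf f
      exact ⟨v, hv, fun i => by simpa [hfv i] using hδ, fun h => absurd h hfy⟩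
  obtain ⟨g, hg, hgv⟩ := exists_norm_eq_one_apply_eq_one hv
  exact ⟨(v, g), ⟨hv, hg, hgv⟩, hfv, hvy⟩

theorem exists_seq_norm_eq_one_sphere_subset_closure [Nontrivial X]
    [TopologicalSpace.SeparableSpace X] :
    ∃ y : ℕ → X, (∀ k, ‖y k‖ = 1) ∧ sphere 0 1 ⊆ closure (range y) := by
  have : Nonempty (sphere (0 : X) 1) := NormedSpace.sphere_nonempty_rclike (𝕜 := ℝ) zero_le_one
  obtain ⟨u, hu⟩ := TopologicalSpace.exists_dense_seq (sphere (0 : X) 1)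
  refine ⟨fun k => u k, fun k => by simp, fun x hx => ?_⟩
  rw [← Function.comp_def, range_comp]
  exact Subtype.dense_iff.mp hu hx

theorem abs_apply_sub_norm_sub_le {f : X →L[ℝ] ℝ} (hf : ‖f‖ ≤ 1) (x y : X) :
    |f y| - ‖y - x‖ ≤ |f x| := by
  have : |f y - f x| ≤ ‖y - x‖ := by
    simpa [← map_sub] using f.le_of_opNorm_le hf (y - x)
  linarith [abs_sub_abs_le_abs_sub (f y) (f x)]

theorem mul_norm_le_iSup_abs_apply {ι : Type*} {f : ι → X →L[ℝ] ℝ} {δ : ℝ}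
    (h : ∀ x : X, ‖x‖ = 1 → δ ≤ ⨆ i, |f i x|) (x : X) : δ * ‖x‖ ≤ ⨆ i, |f i x| := by
  rcases eq_or_ne x 0 with rfl | hx
  · simp
  have hfx : ∀ i, |f i x| = ‖x‖ * |f i ((‖x‖⁻¹ : ℝ) • x)| := fun i => by
    rw [map_smul, smul_eq_mul, abs_mul, abs_inv, abs_norm,
      mul_inv_cancel_left₀ (norm_ne_zero_iff.mpr hx)]
  calc δ * ‖x‖ = ‖x‖ * δ := mul_comm _ _
    _ ≤ ‖x‖ * ⨆ i, |f i ((‖x‖⁻¹ : ℝ) • x)| := by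
      gcongr
      exact h _ (norm_smul_inv_norm hx)
    _ = ⨆ i, |f i x| := by simp only [Real.mul_iSup_of_nonneg (norm_nonneg x), hfx]

theorem le_iSup_abs_apply {v y : ℕ → X} {f : ℕ → X →L[ℝ] ℝ} {δ : ℝ}
    (hf : ∀ k, ‖f k‖ ≤ 1) (hfv : ∀ k, f k (v k) = 1)
    (hy : sphere 0 1 ⊆ closure (range y)) (hvy : ∀ k, (∀ j < k, |f j (y k)| ≤ δ) → v k = y k)
    (hδ1 : δ < 1) {x : X} (hx : ‖x‖ = 1) : δ ≤ ⨆ j, |f j x| := by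
  have hbdd : BddAbove (range fun j => |f j x|) := ⟨1, by
    rintro _ ⟨j, rfl⟩
    simpa [hx] using (f j).le_of_opNorm_le (hf j) x⟩
  refine le_of_forall_sub_le fun ε hε => ?_
  obtain ⟨k, hk⟩ := mem_closure_range_iff.mp (hy (mem_sphere_zero_iff_norm.mpr hx)) ε hε
  rw [dist_eq_norm'] at hk
  by_cases hfy : ∀ j < k, |f j (y k)| ≤ δ
  · have hfyk : |f k (y k)| = 1 := by rw [← hvy k hfy, hfv, abs_one]
    have := abs_apply_sub_norm_sub_le (hf k) x (y k)
    exact le_ciSup_of_le hbdd k (by linarith)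
  · push Not at hfy
    obtain ⟨j, -, hj⟩ := hfy
    have := abs_apply_sub_norm_sub_le (hf j) x (y k)
    exact le_ciSup_of_le hbdd j (by linarith)

end

theorem exists_biorthogonal_like_system_general
    {X : Type*} [NormedAddCommGroup X] [NormedSpace ℝ X]
    [TopologicalSpace.SeparableSpace X]
    (hinf : ¬ FiniteDimensional ℝ X)
    (δ : ℝ) (hδ : 0 < δ) (hδ1 : δ < 1) :
    ∃ (v : ℕ → X) (vstar : ℕ → X →L[ℝ] ℝ),
      (∀ j, ‖v j‖ = 1 ∧ ‖vstar j‖ = 1 ∧ vstar j (v j) = 1) ∧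
      (∀ j k, j < k → |vstar j (v k)| ≤ δ) ∧
      (∀ x : X, δ * ‖x‖ ≤ ⨆ j, |vstar j x|) := by
  have : Nontrivial X := by
    by_contra h
    exact hinf (by rw [not_nontrivial_iff_subsingleton] at h; infer_instance)
  obtain ⟨y, hy1, hy⟩ := exists_seq_norm_eq_one_sphere_subset_closure (X := X)
  obtain ⟨p, hp⟩ :=
    Nat.exists_seq_forall_of_forall_exists fun k (prev : Fin k → X × (X →L[ℝ] ℝ)) =>
      exists_norming_pair_abs_apply_le hinf hδ.le (fun j => (prev j).2) (hy1 k)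
  refine ⟨fun k => (p k).1, fun k => (p k).2, fun k => (hp k).1,
    fun j k hjk => (hp k).2.1 ⟨j, hjk⟩, mul_norm_le_iSup_abs_apply fun x hx => ?_⟩
  exact le_iSup_abs_apply (fun k => (hp k).1.2.1.le) (fun k => (hp k).1.2.2) hy
    (fun k h => (hp k).2.2 fun j => h j j.2) hδ1 hx

theorem exists_biorthogonal_like_system
    {X : Type*} [NormedAddCommGroup X] [NormedSpace ℝ X]
    [CompleteSpace X] [TopologicalSpace.SeparableSpace X]
    (hinf : ¬ FiniteDimensional ℝ X)
    (δ : ℝ) (hδ : 0 < δ) (hδ1 : δ < 1) :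
    ∃ (v : ℕ → X) (vstar : ℕ → X →L[ℝ] ℝ),
      (∀ j, ‖v j‖ = 1 ∧ ‖vstar j‖ = 1 ∧ vstar j (v j) = 1) ∧
      (∀ j k, j < k → |vstar j (v k)| ≤ δ) ∧
      (∀ x : X, δ * ‖x‖ ≤ ⨆ j, |vstar j x|) :=
  exists_biorthogonal_like_system_general hinf δ hδ hδ1
end

section
/- Let X be a normed space, δ, η ∈ (0,1), η_δ = min{η, 1-δ}, and let C be a convex set with B(0, η_δ) ⊆ C. For x ∈ C with ‖x‖ ≥ √(1-δ), set x₀ = (√(1-δ)/‖x‖)·x, y₀ = ((η_δ + (1-δ))/(η_δ + √(1-δ)))·x₀, and r = η_δ·(√(1-δ) - (1-δ))/(η_δ + √(1-δ)). Then r > 0, ‖y₀‖ - r = 1 - δ (so the closed ball B(y₀, r) is disjoint from the open ball of radius 1-δ around 0), and B(y₀, r) ⊆ C. -/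
/-!
With `t = (η_δ + (1 - δ)) / (η_δ + √(1 - δ))` one has `y₀ = t • x₀` and `r = (1 - t) η_δ`, so
`B(y₀, r) = t • {x₀} + (1 - t) • B(0, η_δ)` is a convex combination of subsets of `C`; here `x₀ ∈ C`
lies on the segment `[0, x]`. Both `t ≤ 1` and `r > 0` come from `1 - δ < √(1 - δ)`.
-/

open Metric Pointwise

theorem Convex.closedBall_smul_subset {X : Type*} [NormedAddCommGroup X] [NormedSpace ℝ X]
    {C : Set X} (hC : Convex ℝ C) {ρ : ℝ} (hρ : 0 ≤ ρ) (hball : closedBall (0 : X) ρ ⊆ C)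
    {p : X} (hp : p ∈ C) {t : ℝ} (ht₀ : 0 ≤ t) (ht₁ : t ≤ 1) :
    closedBall (t • p) ((1 - t) * ρ) ⊆ C := by
  have hsplit : closedBall (t • p) ((1 - t) * ρ) = t • {p} + (1 - t) • closedBall (0 : X) ρ := by
    rw [smul_closedBall _ _ hρ, Set.smul_set_singleton, singleton_add_closedBall, smul_zero,
      add_zero, Real.norm_of_nonneg (sub_nonneg.2 ht₁)]
  rw [hsplit]
  exact (Set.add_subset_add (Set.smul_set_mono (Set.singleton_subset_iff.2 hp))
    (Set.smul_set_mono hball)).trans (hC.set_combo_subset ht₀ (sub_nonneg.2 ht₁) (by ring))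

theorem ball_in_slice_construction
    {X : Type*} [NormedAddCommGroup X] [NormedSpace ℝ X]
    (δ η : ℝ) (hδ : δ ∈ Set.Ioo (0 : ℝ) 1) (hη : η ∈ Set.Ioo (0 : ℝ) 1)
    (C : Set X) (hC : Convex ℝ C)
    (hball : Metric.closedBall (0 : X) (min η (1 - δ)) ⊆ C)
    (x : X) (hx : x ∈ C) (hxnorm : Real.sqrt (1 - δ) ≤ ‖x‖) :
    0 < min η (1 - δ) * (Real.sqrt (1 - δ) - (1 - δ)) / (min η (1 - δ) + Real.sqrt (1 - δ)) ∧
    ‖((min η (1 - δ) + (1 - δ)) / (min η (1 - δ) + Real.sqrt (1 - δ))) •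
        ((Real.sqrt (1 - δ) / ‖x‖) • x)‖ -
      min η (1 - δ) * (Real.sqrt (1 - δ) - (1 - δ)) / (min η (1 - δ) + Real.sqrt (1 - δ))
      = 1 - δ ∧
    Metric.closedBall
      (((min η (1 - δ) + (1 - δ)) / (min η (1 - δ) + Real.sqrt (1 - δ))) •
        ((Real.sqrt (1 - δ) / ‖x‖) • x))
      (min η (1 - δ) * (Real.sqrt (1 - δ) - (1 - δ)) / (min η (1 - δ) + Real.sqrt (1 - δ)))
      ⊆ C := by
  set a := 1 - δ
  set s := √a
  set m := min η a
  have ha : 0 < a := sub_pos.2 hδ.2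
  have has : a < s := Real.lt_sqrt_self_iff.2 ⟨ha.ne', by linarith [hδ.1]⟩
  have hm : 0 < m := lt_min hη.1 ha
  have hs : 0 < s := ha.trans has
  have hms : 0 < m + s := by linarith
  set t := (m + a) / (m + s)
  have ht : t ∈ Set.Icc (0 : ℝ) 1 := ⟨by positivity, (div_le_one hms).2 (by linarith)⟩
  have hr : m * (s - a) / (m + s) = (1 - t) * m := by simp only [t]; field_simp; ring
  have hx₀ : ‖(s / ‖x‖) • x‖ = s := by
    rw [div_eq_mul_inv]
    exact norm_smul_inv_norm' hs.le (norm_pos_iff.1 (hs.trans_le hxnorm))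
  have hx₀C : (s / ‖x‖) • x ∈ C :=
    hC.smul_mem_of_zero_mem (hball (mem_closedBall_self hm.le)) hx
      ⟨by positivity, div_le_one_of_le₀ hxnorm (norm_nonneg x)⟩
  refine ⟨div_pos (mul_pos hm (sub_pos.2 has)) hms, ?_, ?_⟩
  · rw [norm_smul, hx₀, Real.norm_of_nonneg ht.1, hr]
    simp only [t]
    field_simp
    ring
  · rw [hr]
    exact hC.closedBall_smul_subset hm.le hball hx₀C ht.1 ht.2
end

section
/- Let h : F → G be a uniform homeomorphism between subsets F ⊆ X, G ⊆ Y of Banach spaces. If F admits a tiling {C_α} (closed sets with nonempty relative interior covering F, with pairwise intersections of empty relative interior) such that for some R > r > 0 and points c_α, B(c_α, r) ∩ F ⊆ C_α ⊆ B(c_α, R) ∩ F, then G admits a tiling {h(C_α)} with points h(c_α) and some radii ρ > 0 and ω(R) such that B(h(c_α), ρ) ∩ G ⊆ h(C_α) ⊆ B(h(c_α), ω(R)) ∩ G, where ω is a common modulus of continuity of h and h⁻¹. -/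
/-! Since `ω(δ) → 0` as `δ → 0⁺`, `h` is continuous on `F`, so preimages of relatively open subsets
of `G` are relatively open in `F`; as `h` is a bijection `F → G` this carries the empty relative
interiors of the pairwise intersections over. Choosing `ρ > 0` with `ω(ρ) < r`, the modulus of `h⁻¹`
sends `B(h(c_α), ρ) ∩ G` into `B(c_α, r) ∩ F ⊆ C_α`, and the modulus of `h` sends
`C_α ⊆ B(c_α, R)` into `B(h(c_α), ω(R))`. -/

open Set Metric Filter Topology

def HasEmptyRelInterior {X : Type*} [TopologicalSpace X] (s A : Set X) : Prop :=
  ∀ U : Set X, IsOpen U → U ∩ s ⊆ A → U ∩ s = ∅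

theorem HasEmptyRelInterior.image {X Y : Type*} [TopologicalSpace X] [TopologicalSpace Y]
    {f : X → Y} {s A : Set X} {t : Set Y} (hA : HasEmptyRelInterior s A) (hAs : A ⊆ s)
    (hf : ContinuousOn f s) (hbij : BijOn f s t) : HasEmptyRelInterior t (f '' A) := by
  intro V hV hVA
  refine eq_empty_of_forall_notMem fun y ⟨hyV, hyt⟩ => ?_
  obtain ⟨x, hxs, rfl⟩ := hbij.surjOn hyt
  obtain ⟨U, hU, hpre⟩ := continuousOn_iff'.mp hf V hV
  have hUA : U ∩ s ⊆ A := by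
    intro x' hx'
    obtain ⟨hx'V, hx's⟩ : x' ∈ f ⁻¹' V ∩ s := hpre ▸ hx'
    obtain ⟨a, haA, hfa⟩ := hVA ⟨hx'V, hbij.mapsTo hx's⟩
    exact hbij.injOn (hAs haA) hx's hfa ▸ haA
  have hx : x ∈ U ∩ s := hpre ▸ ⟨hyV, hxs⟩
  exact (hA U hU hUA).subset hx

theorem exists_pos_lt_of_tendsto_nhdsGT_zero {ω : ℝ → ℝ} (hω : Tendsto ω (𝓝[>] 0) (𝓝 0))
    {ε : ℝ} (hε : 0 < ε) : ∃ δ > 0, ω δ < ε := by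
  obtain ⟨δ, hωδ, hδ⟩ := ((hω.eventually_lt_const hε).and self_mem_nhdsWithin).exists
  exact ⟨δ, hδ, hωδ⟩

section ModulusOfContinuity

variable {α β : Type*} [PseudoMetricSpace α] [PseudoMetricSpace β]

def IsModulusOfContinuityOn (ω : ℝ → ℝ) (f : α → β) (s : Set α) : Prop :=
  ∀ δ > (0 : ℝ), ∀ x ∈ s, ∀ x' ∈ s, dist x x' ≤ δ → dist (f x) (f x') ≤ ω δ

namespace IsModulusOfContinuityOn

variable {ω : ℝ → ℝ} {f : α → β} {s : Set α}

theorem uniformContinuousOn (hf : IsModulusOfContinuityOn ω f s)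
    (hω : Tendsto ω (𝓝[>] 0) (𝓝 0)) : UniformContinuousOn f s := by
  refine Metric.uniformContinuousOn_iff.mpr fun ε hε => ?_
  obtain ⟨δ, hδ, hωδ⟩ := exists_pos_lt_of_tendsto_nhdsGT_zero hω hε
  exact ⟨δ, hδ, fun x hx x' hx' hd => (hf δ hδ x hx x' hx' hd.le).trans_lt hωδ⟩

theorem mapsTo_closedBall (hf : IsModulusOfContinuityOn ω f s) {δ : ℝ} (hδ : 0 < δ) {x : α}
    (hx : x ∈ s) : MapsTo f (closedBall x δ ∩ s) (closedBall (f x) (ω δ)) :=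
  fun _ ⟨hx'δ, hx's⟩ => hf δ hδ _ hx's x hx hx'δ

theorem image_subset_closedBall_inter {t : Set β} (hf : IsModulusOfContinuityOn ω f s)
    (hst : MapsTo f s t) {c : α} (hc : c ∈ s) {R : ℝ} (hR : 0 < R) {A : Set α}
    (hA : A ⊆ closedBall c R ∩ s) : f '' A ⊆ closedBall (f c) (ω R) ∩ t :=
  (image_mono hA).trans
    ((hf.mapsTo_closedBall hR hc).inter (hst.mono_left inter_subset_right)).image_subset

theorem closedBall_inter_subset_image {t : Set β} {g : β → α}
    (hg : IsModulusOfContinuityOn ω g t) (hgt : MapsTo g t s) (hfg : RightInvOn g f t)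
    {c : α} (hfc : f c ∈ t) (hgfc : g (f c) = c) {ρ r : ℝ} (hρ : 0 < ρ) (hωρ : ω ρ ≤ r)
    {A : Set α} (hA : closedBall c r ∩ s ⊆ A) : closedBall (f c) ρ ∩ t ⊆ f '' A := by
  rintro y ⟨hyρ, hyt⟩
  have hgy : g y ∈ closedBall c r := by
    simpa only [mem_closedBall, hgfc] using (hg ρ hρ y hyt (f c) hfc hyρ).trans hωρ
  exact ⟨g y, hA ⟨hgy, hgt hyt⟩, hfg hyt⟩

end IsModulusOfContinuityOn

end ModulusOfContinuity

theorem uniform_homeomorphism_preserves_normal_tilings_general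
    {X Y : Type*} [NormedAddCommGroup X]
    [NormedAddCommGroup Y]
    (F : Set X) (G : Set Y) (h : X → Y) (hinv : Y → X)
    (hmapsto : ∀ x ∈ F, h x ∈ G) (hinvmapsto : ∀ y ∈ G, hinv y ∈ F)
    (hleft : ∀ x ∈ F, hinv (h x) = x) (hright : ∀ y ∈ G, h (hinv y) = y)
    (ω : ℝ → ℝ)
    (hω0 : Filter.Tendsto ω (nhdsWithin 0 (Set.Ioi 0)) (nhds 0))
    (hmodh : ∀ δ > (0 : ℝ), ∀ x ∈ F, ∀ x' ∈ F, ‖x - x'‖ ≤ δ → ‖h x - h x'‖ ≤ ω δ)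
    (hmodinv : ∀ δ > (0 : ℝ), ∀ y ∈ G, ∀ y' ∈ G, ‖y - y'‖ ≤ δ → ‖hinv y - hinv y'‖ ≤ ω δ)
    {ι : Type*} (C : ι → Set X) (c : ι → X) (r R : ℝ) (hrR : 0 < r) (hRr : r < R)
    (hsub : ∀ α, C α ⊆ F) (hc : ∀ α, c α ∈ F)
    (hcover : F ⊆ ⋃ α, C α)
    (hdisj : ∀ α β, α ≠ β → ∀ U : Set X, IsOpen U → U ∩ F ⊆ C α ∩ C β → U ∩ F = ∅)
    (hinner : ∀ α, Metric.closedBall (c α) r ∩ F ⊆ C α)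
    (houter : ∀ α, C α ⊆ Metric.closedBall (c α) R ∩ F) :
    ∃ ρ : ℝ, 0 < ρ ∧
      (G ⊆ ⋃ α, h '' (C α)) ∧
      (∀ α β, α ≠ β → ∀ V : Set Y, IsOpen V →
        V ∩ G ⊆ (h '' (C α)) ∩ (h '' (C β)) → V ∩ G = ∅) ∧
      (∀ α, Metric.closedBall (h (c α)) ρ ∩ G ⊆ h '' (C α)) ∧
      (∀ α, h '' (C α) ⊆ Metric.closedBall (h (c α)) (ω R) ∩ G) := by
  have hmod_h : IsModulusOfContinuityOn ω h F := by
    simpa only [IsModulusOfContinuityOn, dist_eq_norm] using hmodh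
  have hmod_inv : IsModulusOfContinuityOn ω hinv G := by
    simpa only [IsModulusOfContinuityOn, dist_eq_norm] using hmodinv
  have hbij : BijOn h F G := InvOn.bijOn ⟨hleft, hright⟩ hmapsto hinvmapsto
  obtain ⟨ρ, hρ, hωρ⟩ := exists_pos_lt_of_tendsto_nhdsGT_zero hω0 hrR
  refine ⟨ρ, hρ, ?_, fun α β hne => ?_, fun α => ?_, fun α => ?_⟩
  · exact hbij.surjOn.trans ((image_mono hcover).trans image_iUnion.subset)
  · rw [← hbij.injOn.image_inter (hsub α) (hsub β)]
    exact HasEmptyRelInterior.image (hdisj α β hne) (inter_subset_left.trans (hsub α))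
      (hmod_h.uniformContinuousOn hω0).continuousOn hbij
  · exact hmod_inv.closedBall_inter_subset_image hinvmapsto hright (hmapsto _ (hc α))
      (hleft _ (hc α)) hρ hωρ.le (hinner α)
  · exact hmod_h.image_subset_closedBall_inter hmapsto (hc α) (hrR.trans hRr) (houter α)

theorem uniform_homeomorphism_preserves_normal_tilings
    {X Y : Type*} [NormedAddCommGroup X] [NormedSpace ℝ X] [CompleteSpace X]
    [NormedAddCommGroup Y] [NormedSpace ℝ Y] [CompleteSpace Y]
    (F : Set X) (G : Set Y) (h : X → Y) (hinv : Y → X)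
    (hmapsto : ∀ x ∈ F, h x ∈ G) (hinvmapsto : ∀ y ∈ G, hinv y ∈ F)
    (hleft : ∀ x ∈ F, hinv (h x) = x) (hright : ∀ y ∈ G, h (hinv y) = y)
    (ω : ℝ → ℝ)
    (hω0 : Filter.Tendsto ω (nhdsWithin 0 (Set.Ioi 0)) (nhds 0))
    (hmodh : ∀ δ > (0 : ℝ), ∀ x ∈ F, ∀ x' ∈ F, ‖x - x'‖ ≤ δ → ‖h x - h x'‖ ≤ ω δ)
    (hmodinv : ∀ δ > (0 : ℝ), ∀ y ∈ G, ∀ y' ∈ G, ‖y - y'‖ ≤ δ → ‖hinv y - hinv y'‖ ≤ ω δ)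
    {ι : Type*} (C : ι → Set X) (c : ι → X) (r R : ℝ) (hrR : 0 < r) (hRr : r < R)
    (hclosed : ∀ α, IsClosed (C α)) (hsub : ∀ α, C α ⊆ F) (hc : ∀ α, c α ∈ F)
    (hcover : F ⊆ ⋃ α, C α)
    (hdisj : ∀ α β, α ≠ β → ∀ U : Set X, IsOpen U → U ∩ F ⊆ C α ∩ C β → U ∩ F = ∅)
    (hinner : ∀ α, Metric.closedBall (c α) r ∩ F ⊆ C α)
    (houter : ∀ α, C α ⊆ Metric.closedBall (c α) R ∩ F) :
    ∃ ρ : ℝ, 0 < ρ ∧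
      (G ⊆ ⋃ α, h '' (C α)) ∧
      (∀ α β, α ≠ β → ∀ V : Set Y, IsOpen V →
        V ∩ G ⊆ (h '' (C α)) ∩ (h '' (C β)) → V ∩ G = ∅) ∧
      (∀ α, Metric.closedBall (h (c α)) ρ ∩ G ⊆ h '' (C α)) ∧
      (∀ α, h '' (C α) ⊆ Metric.closedBall (h (c α)) (ω R) ∩ G) :=
  uniform_homeomorphism_preserves_normal_tilings_general F G h hinv hmapsto hinvmapsto hleft hright
    ω hω0 hmodh hmodinv C c r R hrR hRr hsub hc hcover hdisj hinner houter
end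

section
/- The Mazur map M : L²(μ) → L¹(μ), M(f)(x) = sign(f(x))·|f(x)|², is Lipschitz with constant 2 on the closed unit ball of L²(μ): for all f, g with ‖f‖₂ ≤ 1 and ‖g‖₂ ≤ 1, ‖M(f) - M(g)‖₁ ≤ 2‖f - g‖₂. -/
/-! Pointwise, `M a - M b = (a - b)|a| + b(|a| - |b|)`, so `|M a - M b| ≤ |a - b| (|a| + |b|)`.
Integrating and applying Cauchy–Schwarz gives `‖M f - M g‖₁ ≤ ‖f - g‖₂ (‖f‖₂ + ‖g‖₂)`, and the
last factor is at most `2` on the unit ball. -/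

open MeasureTheory
open scoped ENNReal

lemma Real.sign_mul_abs_sq (a : ℝ) : Real.sign a * |a| ^ 2 = a * |a| := by
  rcases lt_trichotomy a 0 with h | rfl | h
  · rw [Real.sign_of_neg h, abs_of_neg h]; ring
  · simp
  · rw [Real.sign_of_pos h, abs_of_pos h]; ring

lemma abs_mul_abs_sub_mul_abs_le (a b : ℝ) :
    |(a * |a| - b * |b|)| ≤ |a - b| * (|a| + |b|) :=
  calc |(a * |a| - b * |b|)| = |(a - b) * |a| + b * (|a| - |b|)| := by ring_nf
    _ ≤ |a - b| * |a| + |b| * |a - b| := by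
      grw [abs_add_le, abs_mul, abs_mul, abs_abs, abs_abs_sub_abs_le_abs_sub]
    _ = |a - b| * (|a| + |b|) := by ring

section

variable {α : Type*} [MeasurableSpace α] {μ : Measure α} {f g : α → ℝ}

lemma eLpNorm_abs_add_abs_le {p : ℝ≥0∞} (hp : 1 ≤ p) (hf : AEStronglyMeasurable f μ)
    (hg : AEStronglyMeasurable g μ) :
    eLpNorm (fun x => |f x| + |g x|) p μ ≤ eLpNorm f p μ + eLpNorm g p μ :=
  (eLpNorm_add_le hf.norm hg.norm hp).trans_eq (by rw [eLpNorm_norm, eLpNorm_norm])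

lemma eLpNorm_mul_abs_sub_mul_abs_le (hf : AEStronglyMeasurable f μ)
    (hg : AEStronglyMeasurable g μ) :
    eLpNorm (fun x => f x * |f x| - g x * |g x|) 1 μ
      ≤ eLpNorm (fun x => f x - g x) 2 μ * (eLpNorm f 2 μ + eLpNorm g 2 μ) :=
  calc eLpNorm (fun x => f x * |f x| - g x * |g x|) 1 μ
      ≤ eLpNorm (fun x => (f x - g x) * (|f x| + |g x|)) 1 μ := by
        refine eLpNorm_mono fun x => ?_
        simp only [Real.norm_eq_abs, abs_mul]
        rw [abs_of_nonneg (by positivity : 0 ≤ |f x| + |g x|)]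
        exact abs_mul_abs_sub_mul_abs_le _ _
    _ ≤ eLpNorm (fun x => f x - g x) 2 μ * eLpNorm (fun x => |f x| + |g x|) 2 μ :=
        eLpNorm_smul_le_mul_eLpNorm (p := 2) (q := 2) (r := 1) (φ := fun x => f x - g x)
          (f := fun x => |f x| + |g x|) (hf.norm.add hg.norm) (hf.sub hg)
    _ ≤ eLpNorm (fun x => f x - g x) 2 μ * (eLpNorm f 2 μ + eLpNorm g 2 μ) := by
        gcongr
        exact eLpNorm_abs_add_abs_le one_le_two hf hg

end

theorem mazur_map_lipschitz_on_unit_ball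
    {α : Type*} [MeasurableSpace α] (μ : Measure α)
    (f g : α → ℝ) (hf : Measurable f) (hg : Measurable g)
    (hf2 : eLpNorm f 2 μ ≤ 1) (hg2 : eLpNorm g 2 μ ≤ 1) :
    eLpNorm (fun x => Real.sign (f x) * |f x| ^ 2 - Real.sign (g x) * |g x| ^ 2) 1 μ
      ≤ 2 * eLpNorm (fun x => f x - g x) 2 μ := by
  simp only [Real.sign_mul_abs_sq]
  calc eLpNorm (fun x => f x * |f x| - g x * |g x|) 1 μ
      ≤ eLpNorm (fun x => f x - g x) 2 μ * (eLpNorm f 2 μ + eLpNorm g 2 μ) :=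
        eLpNorm_mul_abs_sub_mul_abs_le hf.aestronglyMeasurable hg.aestronglyMeasurable
    _ ≤ eLpNorm (fun x => f x - g x) 2 μ * (1 + 1) := by gcongr
    _ = 2 * eLpNorm (fun x => f x - g x) 2 μ := by rw [one_add_one_eq_two, mul_comm]
end
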